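/- arXiv:2107.13051 — 3 statements merged into one kernel-verified Lean document; each statement's English description precedes it below -/
import Mathlib

section
/- Let n > a1 ≥ 1 and a1 < a2 < n be integers and let G = C_n^+(a1,a2) be the directed circulant graph on Z/nZ. If a circuit on G has walk sum mn for a positive integer m, then for every vertex v of G the circuit passes v exactly m times. The same holds for periodic orbits and for pseudo orbits of walk sum mn. -/
/-!
Directed circulant graphs `C_n^+(a1,a2)` on the vertex set `ZMod n`:
circuits, periodic orbits, and pseudo orbits.

Each vertex `v` has exactly two outgoing bonds `(v, v + a1)` and `(v, v + a2)`
(taken mod `n`), where `0 < a1 < a2 < n`.  A bond is recorded by its origin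
vertex together with its arc (`a1` or `a2`).
-/

/-- The list of bonds (origin vertex, arc) of the walk starting at `v`
following the given list of arcs, on the circulant graph with vertex set `ZMod n`. -/
def bondsFrom (n : ℕ) : ZMod n → List ℕ → List (ZMod n × ℕ)
  | _, [] => []
  | v, a :: as => (v, a) :: bondsFrom n (v + (a : ZMod n)) as

/-- A circuit on the directed circulant graph `C_n^+(a1,a2)`: a starting vertex
together with a nonempty list of arcs, each equal to `a1` or `a2`, whose sum is
`0` modulo `n` (so that the walk returns to its starting vertex). -/
structure Circuit (n a1 a2 : ℕ) where
  start : ZMod n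
  arcs : List ℕ
  arcs_ne : arcs ≠ []
  arcs_mem : ∀ a ∈ arcs, a = a1 ∨ a = a2
  closed : ((arcs.sum : ℕ) : ZMod n) = 0

namespace Circuit

variable {n a1 a2 : ℕ}

/-- The length of a circuit: its number of bonds. -/
def len (c : Circuit n a1 a2) : ℕ := c.arcs.length

/-- The walk sum of a circuit: the sum of the arcs of its bonds. -/
def walkSum (c : Circuit n a1 a2) : ℕ := c.arcs.sum

/-- The list of bonds of a circuit, in order. -/
def bonds (c : Circuit n a1 a2) : List (ZMod n × ℕ) := bondsFrom n c.start c.arcs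

/-- The number of times a circuit passes the vertex `v`: the number of bonds
`(v₀, a)` of the circuit such that the residue of `v - v₀` in `{0, ..., n-1}`
is strictly smaller than the arc `a` (equivalently, than the residue of the
difference of the terminal and origin vertices of the bond). -/
def passCount (c : Circuit n a1 a2) (v : ZMod n) : ℕ :=
  c.bonds.countP fun b => decide ((v - b.1).val < b.2)

/-- The cyclic rotation of a circuit by `k` steps. -/
def rotate (c : Circuit n a1 a2) (k : ℕ) : Circuit n a1 a2 where
  start := c.start + (((c.arcs.take k).sum : ℕ) : ZMod n)
  arcs := c.arcs.rotate k
  arcs_ne := fun h => c.arcs_ne (by rwa [List.rotate_eq_nil_iff] at h)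
  arcs_mem := fun a ha => c.arcs_mem a (List.mem_rotate.mp ha)
  closed := by
    rw [show (c.arcs.rotate k).sum = c.arcs.sum from (c.arcs.rotate_perm k).sum_eq]
    exact c.closed

/-- A circuit is primitive if it does not consist of a strictly shorter circuit
repeated two or more times. -/
def IsPrimitive (c : Circuit n a1 a2) : Prop :=
  ¬ ∃ (w : List ℕ) (r : ℕ), 2 ≤ r ∧ ((w.sum : ℕ) : ZMod n) = 0 ∧
      c.arcs = (List.replicate r w).flatten

end Circuit

/-- Two circuits are related if the second is a cyclic rotation of the first. -/
def RotRel {n a1 a2 : ℕ} (c c' : Circuit n a1 a2) : Prop := ∃ k, c.rotate k = c'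

/-- A periodic orbit: an equivalence class of circuits under cyclic rotation. -/
def PeriodicOrbit (n a1 a2 : ℕ) : Type := Quot (@RotRel n a1 a2)

namespace PeriodicOrbit

variable {n a1 a2 : ℕ}

/-- The periodic orbit of a circuit. -/
def mk (c : Circuit n a1 a2) : PeriodicOrbit n a1 a2 := Quot.mk _ c

/-- The length of a periodic orbit: the length of any representative circuit. -/
def len : PeriodicOrbit n a1 a2 → ℕ :=
  Quot.lift Circuit.len (by
    rintro c c' ⟨k, rfl⟩
    simp [Circuit.len, Circuit.rotate])

/-- The walk sum of a periodic orbit: the walk sum of any representative circuit. -/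
def walkSum : PeriodicOrbit n a1 a2 → ℕ :=
  Quot.lift Circuit.walkSum (by
    rintro c c' ⟨k, rfl⟩
    exact ((c.arcs.rotate_perm k).sum_eq).symm)

/-- A periodic orbit is primitive if it is the class of a primitive circuit. -/
def IsPrimitive (γ : PeriodicOrbit n a1 a2) : Prop :=
  ∃ c : Circuit n a1 a2, mk c = γ ∧ c.IsPrimitive

/-- The multiset of bonds of a periodic orbit (computed from a representative;
this is independent of the representative since rotation permutes the bonds). -/
noncomputable def bonds (γ : PeriodicOrbit n a1 a2) : Multiset (ZMod n × ℕ) :=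
  ((Quot.exists_rep γ).choose.bonds : Multiset (ZMod n × ℕ))

/-- The number of times a periodic orbit passes a vertex (computed from a
representative; this is independent of the representative). -/
noncomputable def passCount (γ : PeriodicOrbit n a1 a2) (v : ZMod n) : ℕ :=
  (Quot.exists_rep γ).choose.passCount v

end PeriodicOrbit

/-- A pseudo orbit: a finite collection of periodic orbits. -/
abbrev PseudoOrbit (n a1 a2 : ℕ) := Multiset (PeriodicOrbit n a1 a2)

namespace PseudoOrbit

variable {n a1 a2 : ℕ}

/-- The length of a pseudo orbit: the sum of the lengths of its members. -/
def len (ps : PseudoOrbit n a1 a2) : ℕ := (ps.map PeriodicOrbit.len).sum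

/-- The walk sum of a pseudo orbit: the sum of the walk sums of its members. -/
def walkSum (ps : PseudoOrbit n a1 a2) : ℕ := (ps.map PeriodicOrbit.walkSum).sum

/-- A pseudo orbit is primitive if its members are primitive and pairwise distinct. -/
def IsPrimitive (ps : PseudoOrbit n a1 a2) : Prop :=
  (∀ γ ∈ ps, PeriodicOrbit.IsPrimitive γ) ∧ ps.Nodup

/-- The multiset of bonds of a pseudo orbit, counted with multiplicity over all
member periodic orbits. -/
noncomputable def bonds (ps : PseudoOrbit n a1 a2) : Multiset (ZMod n × ℕ) :=
  (ps.map PeriodicOrbit.bonds).sum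

/-- The multiset of origin vertices of the bonds of a pseudo orbit, with multiplicity. -/
noncomputable def origins (ps : PseudoOrbit n a1 a2) : Multiset (ZMod n) :=
  ps.bonds.map Prod.fst

/-- A pseudo orbit has no self-intersection if no vertex occurs more than once
among the origin vertices of its bonds. -/
def NoSelfIntersection (ps : PseudoOrbit n a1 a2) : Prop :=
  ∀ v : ZMod n, ps.origins.count v ≤ 1

/-- The number of vertices occurring exactly twice among the origin vertices of
the bonds of a pseudo orbit. -/
noncomputable def twoEncounterCount (ps : PseudoOrbit n a1 a2) : ℕ :=
  (ps.origins.toFinset.filter fun v => ps.origins.count v = 2).card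

/-- The pseudo orbit has exactly `N` self-intersections, each a 2-encounter of
length zero, and no other self-intersection: exactly `N` vertices occur exactly
twice among the origin vertices of its bonds, no vertex occurs more than twice,
and no bond occurs more than once. -/
def OnlyTwoEncounters (ps : PseudoOrbit n a1 a2) (N : ℕ) : Prop :=
  ps.bonds.Nodup ∧ (∀ v : ZMod n, ps.origins.count v ≤ 2) ∧ ps.twoEncounterCount = N

/-- The number of times a pseudo orbit passes a vertex: the total over its members. -/
noncomputable def passCount (ps : PseudoOrbit n a1 a2) (v : ZMod n) : ℕ :=
  (ps.map fun γ => γ.passCount v).sum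

end PseudoOrbit

/-!
Unroll a walk on `ZMod n` to the integers: starting at `w` with arcs `a₁, a₂, …`, it sweeps the
consecutive integers `w, w + 1, …, w + a₁ + a₂ + ⋯ - 1`, each bond with arc `a` sweeping a block
of `a` of them. Since `a ≤ n`, such a block contains at most one integer reducing to `v`, and
it contains one exactly when the bond passes `v`. So a walk with walk sum `s` passes `v` as often
as `[0, s)` contains integers congruent to `v - w` modulo `n`; for a closed walk `n ∣ s`, and
there are exactly `s / n` of them.
-/

namespace ZMod

variable {n : ℕ} [NeZero n]

theorem natCast_eq_iff_modEq_val (x : ℕ) (c : ZMod n) :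
    (x : ZMod n) = c ↔ x ≡ c.val [MOD n] := by
  rw [← natCast_eq_natCast_iff, natCast_zmod_val]

theorem count_natCast_eq (b : ℕ) (c : ZMod n) :
    Nat.count (fun x : ℕ => (x : ZMod n) = c) b = b / n + if c.val < b % n then 1 else 0 := by
  simp_rw [natCast_eq_iff_modEq_val]
  rw [Nat.count_modEq_card _ (Nat.pos_of_neZero n), Nat.mod_eq_of_lt c.val_lt]

theorem count_natCast_eq_of_le {a : ℕ} (ha : a ≤ n) (c : ZMod n) :
    Nat.count (fun x : ℕ => (x : ZMod n) = c) a = if c.val < a then 1 else 0 := by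
  rw [count_natCast_eq]
  rcases ha.lt_or_eq with ha | rfl
  · rw [Nat.div_eq_of_lt ha, Nat.mod_eq_of_lt ha, zero_add]
  · simp [Nat.div_self (Nat.pos_of_neZero a), c.val_lt]

theorem count_natCast_eq_mul (k : ℕ) (c : ZMod n) :
    Nat.count (fun x : ℕ => (x : ZMod n) = c) (k * n) = k := by
  simp [count_natCast_eq, Nat.pos_of_neZero n]

end ZMod

theorem countP_bondsFrom {n : ℕ} [NeZero n] {as : List ℕ} (has : ∀ a ∈ as, a ≤ n)
    (w v : ZMod n) :
    (bondsFrom n w as).countP (fun b => decide ((v - b.1).val < b.2)) =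
      Nat.count (fun x : ℕ => (x : ZMod n) = v - w) as.sum := by
  induction as generalizing w with
  | nil => simp [bondsFrom]
  | cons a as ih =>
    have hshift (x : ℕ) : ((a + x : ℕ) : ZMod n) = v - w ↔ (x : ZMod n) = v - (w + a) := by
      rw [Nat.cast_add, sub_add_eq_sub_sub, eq_sub_iff_add_eq (c := (a : ZMod n)),
        add_comm (x : ZMod n)]
    rw [bondsFrom, List.countP_cons, List.sum_cons, Nat.count_add,
      ZMod.count_natCast_eq_of_le (has a List.mem_cons_self),
      ih (fun b hb => has b (List.mem_cons_of_mem a hb))]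
    simp only [hshift, decide_eq_true_eq]
    omega

namespace Circuit

variable {n a1 a2 : ℕ} [NeZero n]

theorem passCount_mul_eq_walkSum (h1 : a1 ≤ n) (h2 : a2 ≤ n) (c : Circuit n a1 a2)
    (v : ZMod n) :
    c.passCount v * n = c.walkSum := by
  have hle : ∀ a ∈ c.arcs, a ≤ n := fun a ha => by
    rcases c.arcs_mem a ha with rfl | rfl <;> assumption
  obtain ⟨k, hk⟩ := (ZMod.natCast_eq_zero_iff _ _).mp c.closed
  rw [passCount, bonds, countP_bondsFrom hle, walkSum, hk, mul_comm n k,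
    ZMod.count_natCast_eq_mul]

end Circuit

theorem PeriodicOrbit.passCount_mul_eq_walkSum {n a1 a2 : ℕ} [NeZero n] (h1 : a1 ≤ n)
    (h2 : a2 ≤ n) (γ : PeriodicOrbit n a1 a2) (v : ZMod n) :
    γ.passCount v * n = γ.walkSum := by
  conv_rhs => rw [← (Quot.exists_rep γ).choose_spec]
  exact (Quot.exists_rep γ).choose.passCount_mul_eq_walkSum h1 h2 v

theorem PseudoOrbit.passCount_mul_eq_walkSum {n a1 a2 : ℕ} [NeZero n] (h1 : a1 ≤ n)
    (h2 : a2 ≤ n) (ps : PseudoOrbit n a1 a2) (v : ZMod n) :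
    ps.passCount v * n = ps.walkSum := by
  rw [PseudoOrbit.passCount, PseudoOrbit.walkSum, ← Multiset.sum_map_mul_right]
  exact congrArg Multiset.sum
    (Multiset.map_congr rfl fun γ _ => γ.passCount_mul_eq_walkSum h1 h2 v)

theorem passCount_of_walkSum_general
    (n a1 a2 : ℕ) (h12 : a1 < a2) (h2n : a2 < n)
    (m : ℕ) :
    (∀ c : Circuit n a1 a2, c.walkSum = m * n → ∀ v : ZMod n, c.passCount v = m) ∧
    (∀ γ : PeriodicOrbit n a1 a2, γ.walkSum = m * n → ∀ v : ZMod n, γ.passCount v = m) ∧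
    (∀ ps : PseudoOrbit n a1 a2, ps.walkSum = m * n → ∀ v : ZMod n, ps.passCount v = m) := by
  have hn : 0 < n := by omega
  have : NeZero n := ⟨hn.ne'⟩
  have h1 : a1 ≤ n := by omega
  have h2 : a2 ≤ n := h2n.le
  refine ⟨fun c hc v => ?_, fun γ hγ v => ?_, fun ps hps v => ?_⟩
  · exact Nat.eq_of_mul_eq_mul_right hn ((c.passCount_mul_eq_walkSum h1 h2 v).trans hc)
  · exact Nat.eq_of_mul_eq_mul_right hn ((γ.passCount_mul_eq_walkSum h1 h2 v).trans hγ)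
  · exact Nat.eq_of_mul_eq_mul_right hn ((ps.passCount_mul_eq_walkSum h1 h2 v).trans hps)

/-- On `C_n^+(a1,a2)` (with `n > a1 ≥ 1`, `a1 < a2 < n`), any
circuit with walk sum `m * n` (`m` a positive integer) passes every vertex
exactly `m` times; likewise for periodic orbits and pseudo orbits of walk sum `m * n`. -/
theorem passCount_of_walkSum
    (n a1 a2 : ℕ) (ha1 : 1 ≤ a1) (h1n : a1 < n) (h12 : a1 < a2) (h2n : a2 < n)
    (m : ℕ) (hm : 0 < m) :
    (∀ c : Circuit n a1 a2, c.walkSum = m * n → ∀ v : ZMod n, c.passCount v = m) ∧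
    (∀ γ : PeriodicOrbit n a1 a2, γ.walkSum = m * n → ∀ v : ZMod n, γ.passCount v = m) ∧
    (∀ ps : PseudoOrbit n a1 a2, ps.walkSum = m * n → ∀ v : ZMod n, ps.passCount v = m) :=
  passCount_of_walkSum_general n a1 a2 h12 h2n m
end

section
/- Let a1, d be positive integers, n > a1 + d, and let G = C_n^+(a1, a1+d) be the directed circulant graph on Z/nZ with outgoing arcs a1 and a1+d at every vertex. For every vertex v, every length l > 0, and every positive integer m, the number of primitive circuits on G with origin vertex v, length l, and walk sum mn equals Σ_{ω | gcd(m,l)} μ(ω) · C(l/ω, (mn − a1·l)/(ω·d)), where μ is the Möbius function and C(a,b) denotes the binomial coefficient, interpreted as 0 when b is not a nonnegative integer or b > a. -/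
/-!
A circuit from `v` is determined by its word of arcs, and a word of length `l` over
`{a1, a1 + d}` with sum `S` is determined by the set of positions of the arc `a1 + d`, which has
`(S - a1 l) / d` elements; this gives the binomial coefficients.

A word `w` is an `r`-th power exactly when `r` divides its exponent `|w| / p`, where `p` is the
least rotation fixing `w`. So a circuit with walk sum `m n` is the `r`-th power of a circuit iff
`r` divides both its exponent and `m`, and it is primitive iff these two are coprime. Hence every
circuit of length `l` and walk sum `m n` is, in exactly one way, the `ω`-th power of a primitive
circuit of length `l / ω` and walk sum `(m / ω) n` with `ω ∣ gcd(m, l)`, and Möbius inversion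
over the divisors of `gcd(m, l)` gives the formula.
-/

namespace List

variable {α : Type*}

def periodicExt (w : List α) (i : ℕ) : Option α := w[i % w.length]?

theorem eq_of_periodicExt_eq {w w' : List α} (hlen : w.length = w'.length)
    (h : w.periodicExt = w'.periodicExt) : w = w' := by
  refine ext_getElem? fun i => ?_
  by_cases hi : i < w.length
  · have := congrFun h i
    rwa [periodicExt, periodicExt, ← hlen, Nat.mod_eq_of_lt hi] at this
  · rw [getElem?_eq_none (by omega), getElem?_eq_none (by omega)]

theorem getElem?_flatten_replicate (k : ℕ) (u : List α) {i : ℕ} (hi : i < k * u.length) :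
    (replicate k u).flatten[i]? = u[i % u.length]? := by
  induction k generalizing i with
  | zero => simp at hi
  | succ k ih =>
    rw [replicate_succ, flatten_cons, getElem?_append]
    split_ifs with hiu
    · rw [Nat.mod_eq_of_lt hiu]
    · rw [ih (by rw [Nat.succ_mul] at hi; omega), ← Nat.mod_eq_sub_mod (by omega)]

theorem periodicExt_flatten_replicate {k : ℕ} (hk : k ≠ 0) (u : List α) :
    (replicate k u).flatten.periodicExt = u.periodicExt := by
  funext i
  rcases eq_or_ne u [] with rfl | hu
  · simp [periodicExt]
  have hlen : (replicate k u).flatten.length = k * u.length := by simp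
  have hpos : 0 < k * u.length := Nat.mul_pos (Nat.pos_of_ne_zero hk) (length_pos_iff.mpr hu)
  rw [periodicExt, periodicExt, hlen, getElem?_flatten_replicate k u (Nat.mod_lt _ hpos),
    Nat.mod_mod_of_dvd _ (Dvd.intro_left k rfl)]

theorem rotate_eq_self_iff_periodic {w : List α} {t : ℕ} :
    w.rotate t = w ↔ Function.Periodic w.periodicExt t := by
  rcases eq_or_ne w [] with rfl | hw
  · simp [Function.Periodic, periodicExt]
  have hpos : 0 < w.length := length_pos_iff.mpr hw
  constructor
  · intro h i
    rw [periodicExt, periodicExt, ← Nat.mod_add_mod, ← getElem?_rotate (Nat.mod_lt _ hpos), h]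
  · intro h
    refine ext_getElem? fun i => ?_
    by_cases hi : i < w.length
    · have := h i
      rw [periodicExt, periodicExt, Nat.mod_eq_of_lt hi] at this
      rw [getElem?_rotate hi, this]
    · rw [getElem?_eq_none (by simpa using hi), getElem?_eq_none (by omega)]

theorem rotate_flatten_replicate_eq_self_iff {k : ℕ} (hk : k ≠ 0) {u : List α} {t : ℕ} :
    (replicate k u).flatten.rotate t = (replicate k u).flatten ↔ u.rotate t = u := by
  rw [rotate_eq_self_iff_periodic, rotate_eq_self_iff_periodic, periodicExt_flatten_replicate hk]

theorem eq_flatten_replicate_take {w : List α} {s : ℕ} (hs : w.rotate s = w)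
    (hsw : s ∣ w.length) : w = (replicate (w.length / s) (w.take s)).flatten := by
  rcases eq_or_ne w [] with rfl | hw
  · simp
  have hpos : 0 < w.length := length_pos_iff.mpr hw
  have hs0 : 0 < s := Nat.pos_of_dvd_of_pos hsw hpos
  have hsl : s ≤ w.length := Nat.le_of_dvd hpos hsw
  refine eq_of_periodicExt_eq ?_ ?_
  · simp [Nat.min_eq_left hsl, Nat.div_mul_cancel hsw]
  · rw [periodicExt_flatten_replicate (Nat.div_pos hsl hs0).ne']
    funext i
    have hi : i % s < s := Nat.mod_lt i hs0
    rw [← (rotate_eq_self_iff_periodic.mp hs).map_mod_nat, periodicExt, periodicExt,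
      Nat.mod_eq_of_lt (hi.trans_le hsl), length_take, Nat.min_eq_left hsl,
      getElem?_take, if_pos hi]

theorem iterate_rotate_one (w : List α) (k : ℕ) :
    (fun u : List α => u.rotate 1)^[k] w = w.rotate k := by
  induction k with
  | zero => simp
  | succ k ih => rw [Function.iterate_succ_apply', ih, rotate_rotate]

noncomputable def rotationPeriod (w : List α) : ℕ :=
  Function.minimalPeriod (fun u : List α => u.rotate 1) w

theorem rotate_eq_self_iff_rotationPeriod_dvd {w : List α} {t : ℕ} :
    w.rotate t = w ↔ w.rotationPeriod ∣ t := by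
  rw [rotationPeriod, ← Function.isPeriodicPt_iff_minimalPeriod_dvd, Function.IsPeriodicPt,
    Function.IsFixedPt, iterate_rotate_one]

theorem rotationPeriod_dvd_length (w : List α) : w.rotationPeriod ∣ w.length :=
  rotate_eq_self_iff_rotationPeriod_dvd.mp w.rotate_length

theorem rotationPeriod_pos (w : List α) : 0 < w.rotationPeriod := by
  rcases eq_or_ne w [] with rfl | hw
  · exact Nat.pos_of_dvd_of_pos (rotate_eq_self_iff_rotationPeriod_dvd.mp rfl) Nat.one_pos
  · exact Nat.pos_of_dvd_of_pos w.rotationPeriod_dvd_length (length_pos_iff.mpr hw)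

theorem rotationPeriod_flatten_replicate {k : ℕ} (hk : k ≠ 0) (u : List α) :
    (replicate k u).flatten.rotationPeriod = u.rotationPeriod := by
  refine Nat.dvd_antisymm ?_ ?_
  · rw [← rotate_eq_self_iff_rotationPeriod_dvd, rotate_flatten_replicate_eq_self_iff hk,
      rotate_eq_self_iff_rotationPeriod_dvd]
  · rw [← rotate_eq_self_iff_rotationPeriod_dvd, ← rotate_flatten_replicate_eq_self_iff hk,
      rotate_eq_self_iff_rotationPeriod_dvd]

/-- `w` is the `exponent`-th power of its prefix of length `rotationPeriod`. -/
noncomputable def exponent (w : List α) : ℕ := w.length / w.rotationPeriod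

theorem exponent_pos {w : List α} (hw : w ≠ []) : 0 < w.exponent :=
  Nat.div_pos (Nat.le_of_dvd (length_pos_iff.mpr hw) w.rotationPeriod_dvd_length)
    w.rotationPeriod_pos

theorem exponent_dvd_length (w : List α) : w.exponent ∣ w.length :=
  Nat.div_dvd_of_dvd w.rotationPeriod_dvd_length

theorem exponent_flatten_replicate (k : ℕ) (u : List α) :
    (replicate k u).flatten.exponent = k * u.exponent := by
  rcases eq_or_ne k 0 with rfl | hk
  · simp [exponent]
  rw [exponent, exponent, rotationPeriod_flatten_replicate hk, length_flatten, map_replicate,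
    sum_replicate, smul_eq_mul, Nat.mul_div_assoc _ u.rotationPeriod_dvd_length]

theorem exists_eq_flatten_replicate_iff {w : List α} {r : ℕ} :
    (∃ u, w = (replicate r u).flatten) ↔ r ∣ w.exponent := by
  constructor
  · rintro ⟨u, rfl⟩
    exact exponent_flatten_replicate r u ▸ Dvd.intro _ rfl
  · rintro ⟨q, hq⟩
    have hlen : w.length = r * (q * w.rotationPeriod) := by
      rw [← Nat.mul_assoc, ← hq, exponent, Nat.div_mul_cancel w.rotationPeriod_dvd_length]
    have hrot : w.rotate (q * w.rotationPeriod) = w :=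
      rotate_eq_self_iff_rotationPeriod_dvd.mpr (Dvd.intro_left q rfl)
    rcases Nat.eq_zero_or_pos (q * w.rotationPeriod) with hs | hs
    · exact ⟨[], by simpa [hs] using hlen⟩
    refine ⟨w.take (q * w.rotationPeriod), ?_⟩
    conv_lhs => rw [eq_flatten_replicate_take hrot (Dvd.intro_left r hlen.symm)]
    rw [hlen, Nat.mul_div_cancel _ hs]

theorem flatten_replicate_injective {k : ℕ} (hk : k ≠ 0) :
    Function.Injective fun u : List α => (replicate k u).flatten := by
  intro u u' h
  refine eq_of_periodicExt_eq ?_ ?_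
  · have := congrArg length h
    simp only [length_flatten, map_replicate, sum_replicate, smul_eq_mul] at this
    exact Nat.eq_of_mul_eq_mul_left (Nat.pos_of_ne_zero hk) this
  · rw [← periodicExt_flatten_replicate hk u, ← periodicExt_flatten_replicate hk u']
    exact congrArg periodicExt h

theorem finite_setOf_length_eq_forall_mem {s : Set α} (hs : s.Finite) (l : ℕ) :
    {w : List α | w.length = l ∧ ∀ a ∈ w, a ∈ s}.Finite := by
  have := hs.to_subtype
  refine ((finite_length_eq s l).image (map Subtype.val)).subset ?_
  rintro w ⟨hlen, hmem⟩
  lift w to List s using hmem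
  exact ⟨w, by simpa using hlen, rfl⟩

variable {l : ℕ}

def ofFinset (a b : α) (s : Finset (Fin l)) : List α := ofFn fun i => if i ∈ s then b else a

def positions [DecidableEq α] (b : α) (w : List α) (l : ℕ) : Finset (Fin l) :=
  Finset.univ.filter fun i => w[(i : ℕ)]? = some b

theorem length_ofFinset (a b : α) (s : Finset (Fin l)) : (ofFinset a b s).length = l :=
  length_ofFn

theorem eq_or_eq_of_mem_ofFinset {a b x : α} {s : Finset (Fin l)} (hx : x ∈ ofFinset a b s) :
    x = a ∨ x = b := by
  obtain ⟨i, rfl⟩ := mem_ofFn.mp hx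
  by_cases hi : i ∈ s <;> simp [hi]

theorem sum_ofFinset_add (a d : ℕ) (s : Finset (Fin l)) :
    (ofFinset a (a + d) s).sum = a * l + d * s.card := by
  have hsplit : ∀ i, (if i ∈ s then a + d else a) = a + if i ∈ s then d else 0 := fun i => by
    split_ifs <;> rfl
  simp [ofFinset, sum_ofFn, hsplit, Finset.sum_add_distrib, Finset.sum_ite_mem, Nat.mul_comm]

theorem ofFinset_positions [DecidableEq α] {a b : α} {w : List α} (hw : w.length = l)
    (hmem : ∀ x ∈ w, x = a ∨ x = b) : ofFinset a b (positions b w l) = w := by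
  refine ext_getElem (by rw [length_ofFinset, hw]) fun i hi hiw => ?_
  simp only [ofFinset, positions, List.getElem_ofFn, Finset.mem_filter, Finset.mem_univ, true_and,
    getElem?_eq_getElem hiw, Option.some.injEq]
  rcases hmem _ (getElem_mem hiw) with h | h <;> split_ifs <;> simp_all

theorem positions_ofFinset [DecidableEq α] {a b : α} (hab : a ≠ b) (s : Finset (Fin l)) :
    positions b (ofFinset a b s) l = s := by
  ext i
  by_cases hi : i ∈ s <;> simp [positions, ofFinset, hi, hab]

end List

theorem natCard_finset_add_mul_card_eq {α : Type*} [Fintype α] {a d S : ℕ} (hd : d ≠ 0) :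
    Nat.card {s : Finset α // a + d * s.card = S} =
      if a ≤ S ∧ d ∣ S - a then (Fintype.card α).choose ((S - a) / d) else 0 := by
  split_ifs with h
  · have hiff : ∀ k, a + d * k = S ↔ k = (S - a) / d := fun k => by
      rw [Nat.eq_div_iff_mul_eq_left hd h.2, Nat.mul_comm k d]
      omega
    rw [Nat.card_congr (Equiv.subtypeEquivRight fun s : Finset α => hiff s.card),
      Nat.card_eq_fintype_card, Fintype.card_finset_len]
  · have : IsEmpty {s : Finset α // a + d * s.card = S} :=
      ⟨fun ⟨s, hs⟩ => h ⟨by omega, s.card, by omega⟩⟩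
    exact Nat.card_of_isEmpty

namespace Circuit

variable {n a1 a2 : ℕ}

@[ext]
theorem ext {c c' : Circuit n a1 a2} (hstart : c.start = c'.start) (harcs : c.arcs = c'.arcs) :
    c = c' := by
  cases c
  cases c'
  congr

def pow (c : Circuit n a1 a2) (k : ℕ) (hk : k ≠ 0) : Circuit n a1 a2 where
  start := c.start
  arcs := (List.replicate k c.arcs).flatten
  arcs_ne := by simpa [hk] using c.arcs_ne
  arcs_mem a ha := by
    obtain ⟨u, hu, hau⟩ := List.mem_flatten.mp ha
    exact c.arcs_mem a (List.eq_of_mem_replicate hu ▸ hau)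
  closed := by simp [List.sum_flatten, c.closed]

theorem len_pow (c : Circuit n a1 a2) {k : ℕ} (hk : k ≠ 0) : (c.pow k hk).len = k * c.len := by
  simp [pow, len]

theorem walkSum_pow (c : Circuit n a1 a2) {k : ℕ} (hk : k ≠ 0) :
    (c.pow k hk).walkSum = k * c.walkSum := by
  simp [pow, walkSum, List.sum_flatten]

theorem exists_closed_root_iff {c : Circuit n a1 a2} {m r : ℕ} (hn : n ≠ 0) (hr : r ≠ 0)
    (hc : c.walkSum = m * n) :
    (∃ w : List ℕ, ((w.sum : ℕ) : ZMod n) = 0 ∧ c.arcs = (List.replicate r w).flatten) ↔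
      r ∣ c.arcs.exponent ∧ r ∣ m := by
  have hsum : ∀ w : List ℕ, c.arcs = (List.replicate r w).flatten → r * w.sum = m * n := by
    rintro w hw
    rw [← hc, walkSum, hw, List.sum_flatten, List.map_replicate, List.sum_replicate, smul_eq_mul]
  constructor
  · rintro ⟨w, hw0, hw⟩
    obtain ⟨t, ht⟩ := (ZMod.natCast_eq_zero_iff _ n).mp hw0
    refine ⟨List.exists_eq_flatten_replicate_iff.mp ⟨w, hw⟩, t, ?_⟩
    have := hsum w hw
    rw [ht] at this
    exact Nat.eq_of_mul_eq_mul_right (Nat.pos_of_ne_zero hn) (by rw [← this]; ring)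
  · rintro ⟨hre, q, rfl⟩
    obtain ⟨w, hw⟩ := List.exists_eq_flatten_replicate_iff.mpr hre
    refine ⟨w, (ZMod.natCast_eq_zero_iff _ n).mpr ⟨q, ?_⟩, hw⟩
    have := hsum w hw
    rw [Nat.mul_assoc] at this
    rw [Nat.eq_of_mul_eq_mul_left (Nat.pos_of_ne_zero hr) this, Nat.mul_comm]

theorem isPrimitive_iff_coprime {c : Circuit n a1 a2} {m : ℕ} (hn : n ≠ 0)
    (hc : c.walkSum = m * n) : c.IsPrimitive ↔ Nat.Coprime c.arcs.exponent m := by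
  constructor
  · intro hprim
    have hg : 0 < Nat.gcd c.arcs.exponent m :=
      Nat.gcd_pos_of_pos_left _ (List.exponent_pos c.arcs_ne)
    by_contra hne
    obtain ⟨w, hw0, hw⟩ := (exists_closed_root_iff hn hg.ne' hc).mpr
      ⟨Nat.gcd_dvd_left _ _, Nat.gcd_dvd_right _ _⟩
    exact hprim ⟨w, _, by rw [Nat.Coprime] at hne; omega, hw0, hw⟩
  · rintro hcop ⟨w, r, hr, hw0, hw⟩
    obtain ⟨he, hm⟩ := (exists_closed_root_iff hn (by omega) hc).mp ⟨w, hw0, hw⟩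
    have := Nat.dvd_one.mp (hcop.gcd_eq_one ▸ Nat.dvd_gcd he hm)
    omega

theorem gcd_exponent_pow {p : Circuit n a1 a2} {m k : ℕ} (hn : n ≠ 0) (hk : k ≠ 0)
    (hp : p.IsPrimitive) (hpm : p.walkSum = m * n) :
    Nat.gcd (p.pow k hk).arcs.exponent (k * m) = k := by
  rw [pow, List.exponent_flatten_replicate, Nat.gcd_mul_left,
    ((isPrimitive_iff_coprime hn hpm).mp hp).gcd_eq_one, Nat.mul_one]

theorem eq_of_pow_eq_pow {p p' : Circuit n a1 a2} {k k' m m' : ℕ} (hn : n ≠ 0) (hk : k ≠ 0)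
    (hk' : k' ≠ 0) (hp : p.IsPrimitive) (hp' : p'.IsPrimitive) (hpm : p.walkSum = m * n)
    (hpm' : p'.walkSum = m' * n) (hm : k * m = k' * m') (h : p.pow k hk = p'.pow k' hk') :
    k = k' ∧ p = p' := by
  obtain rfl : k = k' := by
    rw [← gcd_exponent_pow hn hk hp hpm, ← gcd_exponent_pow hn hk' hp' hpm', h, hm]
  exact ⟨rfl, Circuit.ext (congrArg start h :)
    (List.flatten_replicate_injective hk (congrArg arcs h))⟩

theorem exists_isPrimitive_pow_eq {c : Circuit n a1 a2} {m : ℕ} (hn : n ≠ 0)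
    (hc : c.walkSum = m * n) :
    ∃ (p : Circuit n a1 a2) (hk : Nat.gcd c.arcs.exponent m ≠ 0),
      p.IsPrimitive ∧ p.walkSum = m / Nat.gcd c.arcs.exponent m * n ∧
        p.pow _ hk = c := by
  set ω := Nat.gcd c.arcs.exponent m
  have hω : ω ≠ 0 := (Nat.gcd_pos_of_pos_left _ (List.exponent_pos c.arcs_ne)).ne'
  obtain ⟨w, hw0, hw⟩ := (exists_closed_root_iff hn hω hc).mpr
    ⟨Nat.gcd_dvd_left _ _, Nat.gcd_dvd_right _ _⟩
  have hwne : w ≠ [] := by rintro rfl; simp [c.arcs_ne] at hw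
  let p : Circuit n a1 a2 :=
    ⟨c.start, w, hwne, fun a ha => c.arcs_mem a
      (hw ▸ List.mem_flatten.mpr ⟨w, List.mem_replicate.mpr ⟨hω, rfl⟩, ha⟩), hw0⟩
  have hpow : p.pow ω hω = c := Circuit.ext rfl hw.symm
  have hωm : ω * (m / ω) = m := Nat.mul_div_cancel' (Nat.gcd_dvd_right _ _)
  have hpm : p.walkSum = m / ω * n := by
    refine Nat.eq_of_mul_eq_mul_left (Nat.pos_of_ne_zero hω) ?_
    rw [← walkSum_pow p hω, hpow, hc, ← Nat.mul_assoc, hωm]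
  have hexp : c.arcs.exponent / ω = p.arcs.exponent := by
    rw [← hpow, pow, List.exponent_flatten_replicate,
      Nat.mul_div_cancel_left _ (Nat.pos_of_ne_zero hω)]
  refine ⟨p, hω, ?_, hpm, hpow⟩
  rw [isPrimitive_iff_coprime hn hpm, ← hexp]
  exact Nat.coprime_div_gcd_div_gcd (Nat.pos_of_ne_zero hω)

end Circuit

section FixedOrigin

variable {n : ℕ}

def circuitsAt (a1 a2 : ℕ) (v : ZMod n) (l m : ℕ) : Set (Circuit n a1 a2) :=
  {c | c.start = v ∧ c.len = l ∧ c.walkSum = m * n}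

def primitiveCircuitsAt (a1 a2 : ℕ) (v : ZMod n) (l m : ℕ) : Set (Circuit n a1 a2) :=
  {c | c.start = v ∧ c.len = l ∧ c.walkSum = m * n ∧ c.IsPrimitive}

theorem primitiveCircuitsAt_subset (a1 a2 : ℕ) (v : ZMod n) (l m : ℕ) :
    primitiveCircuitsAt a1 a2 v l m ⊆ circuitsAt a1 a2 v l m :=
  fun _ ⟨hv, hl, hm, _⟩ => ⟨hv, hl, hm⟩

instance (a1 a2 : ℕ) (v : ZMod n) (l m : ℕ) : Finite (circuitsAt a1 a2 v l m) := by
  have := (List.finite_setOf_length_eq_forall_mem (Set.toFinite {a1, a2}) l).to_subtype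
  refine Finite.of_injective
    (fun c : circuitsAt a1 a2 v l m => (⟨c.1.arcs, c.2.2.1, c.1.arcs_mem⟩ :
      {w : List ℕ | w.length = l ∧ ∀ a ∈ w, a ∈ ({a1, a2} : Set ℕ)})) ?_
  rintro ⟨c, hc⟩ ⟨c', hc'⟩ h
  exact Subtype.ext (Circuit.ext (hc.1.trans hc'.1.symm) (congrArg Subtype.val h))

instance (a1 a2 : ℕ) (v : ZMod n) (l m : ℕ) : Finite (primitiveCircuitsAt a1 a2 v l m) :=
  Finite.Set.subset _ (primitiveCircuitsAt_subset a1 a2 v l m)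

def circuitsAtEquivFinset {d : ℕ} (hd : d ≠ 0) (a1 : ℕ) (v : ZMod n) {l : ℕ} (hl : l ≠ 0)
    (m : ℕ) :
    circuitsAt a1 (a1 + d) v l m ≃ {s : Finset (Fin l) // a1 * l + d * s.card = m * n} where
  toFun c := ⟨List.positions (a1 + d) c.1.arcs l, by
    rw [← List.sum_ofFinset_add, List.ofFinset_positions c.2.2.1 c.1.arcs_mem]
    exact c.2.2.2⟩
  invFun s := ⟨⟨v, List.ofFinset a1 (a1 + d) s.1,
      fun h => hl (by simpa [h] using (List.length_ofFinset a1 (a1 + d) s.1).symm),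
      fun _ => List.eq_or_eq_of_mem_ofFinset,
      by simp [List.sum_ofFinset_add, s.2]⟩,
    rfl, List.length_ofFinset _ _ _, (List.sum_ofFinset_add _ _ _).trans s.2⟩
  left_inv c := Subtype.ext (Circuit.ext c.2.1.symm (List.ofFinset_positions c.2.2.1 c.1.arcs_mem))
  right_inv s := Subtype.ext (List.positions_ofFinset (by omega) s.1)

theorem card_circuitsAt_eq_choose {d : ℕ} (hd : d ≠ 0) (a1 : ℕ) (v : ZMod n) {l : ℕ} (hl : l ≠ 0)
    (m : ℕ) :
    Nat.card (circuitsAt a1 (a1 + d) v l m) =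
      if a1 * l ≤ m * n ∧ d ∣ m * n - a1 * l then l.choose ((m * n - a1 * l) / d) else 0 := by
  rw [Nat.card_congr (circuitsAtEquivFinset hd a1 v hl m), natCard_finset_add_mul_card_eq hd,
    Fintype.card_fin]

theorem card_circuitsAt_eq_sum_card_primitiveCircuitsAt (hn : n ≠ 0) (a1 a2 : ℕ) (v : ZMod n)
    (l m : ℕ) :
    Nat.card (circuitsAt a1 a2 v l m) =
      ∑ ω ∈ (m.gcd l).divisors, Nat.card (primitiveCircuitsAt a1 a2 v (l / ω) (m / ω)) := by
  have hdvd : ∀ {ω}, ω ∈ (m.gcd l).divisors → ω ∣ m ∧ ω ∣ l := fun hω =>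
    Nat.dvd_gcd_iff.mp (Nat.dvd_of_mem_divisors hω)
  have hne : ∀ {ω}, ω ∈ (m.gcd l).divisors → ω ≠ 0 := fun hω => (Nat.pos_of_mem_divisors hω).ne'
  let Ψ : (Σ ω : (m.gcd l).divisors, primitiveCircuitsAt a1 a2 v (l / ω) (m / ω)) →
      circuitsAt a1 a2 v l m := fun ⟨⟨ω, hω⟩, p⟩ =>
    ⟨p.1.pow ω (hne hω), p.2.1,
      by rw [Circuit.len_pow, p.2.2.1, Nat.mul_div_cancel' (hdvd hω).2],
      by rw [Circuit.walkSum_pow, p.2.2.2.1, ← Nat.mul_assoc, Nat.mul_div_cancel' (hdvd hω).1]⟩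
  have hinj : Function.Injective Ψ := by
    rintro ⟨⟨ω, hω⟩, ⟨p, _, _, hpm, hp⟩⟩ ⟨⟨ω', hω'⟩, ⟨p', _, _, hpm', hp'⟩⟩ h
    obtain ⟨rfl, rfl⟩ := Circuit.eq_of_pow_eq_pow hn (hne hω) (hne hω') hp hp' hpm hpm'
      (by rw [Nat.mul_div_cancel' (hdvd hω).1, Nat.mul_div_cancel' (hdvd hω').1])
      (congrArg Subtype.val h)
    rfl
  have hsurj : Function.Surjective Ψ := by
    rintro ⟨c, hv, hl, hm⟩
    obtain ⟨p, hω, hp, hpm, hpow⟩ := Circuit.exists_isPrimitive_pow_eq hn hm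
    have hl0 : l ≠ 0 := hl ▸ (List.length_pos_iff.mpr c.arcs_ne).ne'
    have hωl : Nat.gcd c.arcs.exponent m ∣ l :=
      (Nat.gcd_dvd_left _ _).trans (hl ▸ c.arcs.exponent_dvd_length)
    have hmem : Nat.gcd c.arcs.exponent m ∈ (m.gcd l).divisors :=
      Nat.mem_divisors.mpr ⟨Nat.dvd_gcd (Nat.gcd_dvd_right _ _) hωl, Nat.gcd_ne_zero_right hl0⟩
    have hpl : p.len = l / Nat.gcd c.arcs.exponent m := by
      rw [← hl, ← congrArg Circuit.len hpow, Circuit.len_pow,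
        Nat.mul_div_cancel_left _ (Nat.pos_of_ne_zero hω)]
    exact ⟨⟨⟨_, hmem⟩, ⟨p, (congrArg Circuit.start hpow).trans hv, hpl, hpm, hp⟩⟩,
      Subtype.ext hpow⟩
  rw [← Finset.sum_coe_sort, ← Nat.card_sigma, Nat.card_congr (Equiv.ofBijective Ψ ⟨hinj, hsurj⟩)]

theorem card_primitiveCircuitsAt_eq_sum_moebius (hn : n ≠ 0) (a1 a2 : ℕ) (v : ZMod n) {l : ℕ}
    (hl : 0 < l) (m : ℕ) :
    (Nat.card (primitiveCircuitsAt a1 a2 v l m) : ℤ) =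
      ∑ ω ∈ (m.gcd l).divisors,
        (ArithmeticFunction.moebius ω : ℤ) * Nat.card (circuitsAt a1 a2 v (l / ω) (m / ω)) := by
  set g := m.gcd l
  have hg : 0 < g := Nat.gcd_pos_of_pos_right m hl
  have hcop : Nat.Coprime (m / g) (l / g) := Nat.coprime_div_gcd_div_gcd hg
  have hsum : ∀ t > 0, ∑ d ∈ t.divisors,
      (Nat.card (primitiveCircuitsAt a1 a2 v (d * (l / g)) (d * (m / g))) : ℤ) =
        Nat.card (circuitsAt a1 a2 v (t * (l / g)) (t * (m / g))) := by
    intro t _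
    rw [card_circuitsAt_eq_sum_card_primitiveCircuitsAt hn, Nat.gcd_mul_left, hcop.gcd_eq_one,
      Nat.mul_one, Nat.cast_sum, ← Nat.sum_div_divisors]
    refine Finset.sum_congr rfl fun d hd => ?_
    rw [Nat.div_mul_right_comm (Nat.dvd_of_mem_divisors hd),
      Nat.div_mul_right_comm (Nat.dvd_of_mem_divisors hd)]
  have := ArithmeticFunction.sum_eq_iff_sum_mul_moebius_eq.mp hsum g hg
  simp only [Int.cast_id] at this
  rw [Nat.mul_div_cancel' (m.gcd_dvd_right l), Nat.mul_div_cancel' (m.gcd_dvd_left l),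
    Nat.sum_divisorsAntidiagonal (fun x y => (ArithmeticFunction.moebius x : ℤ) *
      Nat.card (circuitsAt a1 a2 v (y * (l / g)) (y * (m / g))))] at this
  rw [← this]
  refine Finset.sum_congr rfl fun ω hω => ?_
  rw [Nat.div_mul_right_comm (Nat.dvd_of_mem_divisors hω),
    Nat.div_mul_right_comm (Nat.dvd_of_mem_divisors hω), Nat.mul_div_cancel' (m.gcd_dvd_right l),
    Nat.mul_div_cancel' (m.gcd_dvd_left l)]

end FixedOrigin

theorem ite_choose_eq_ite_choose_mul {K N d ω : ℕ} (hω : ω ≠ 0) (f : ℕ → ℕ) :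
    (if K ≤ N ∧ d ∣ N - K then f ((N - K) / d) else 0) =
      if ω * K ≤ ω * N ∧ ω * d ∣ ω * N - ω * K then f ((ω * N - ω * K) / (ω * d)) else 0 := by
  have hω' := Nat.pos_of_ne_zero hω
  simp only [← Nat.mul_sub, Nat.mul_le_mul_left_iff hω', Nat.mul_dvd_mul_iff_left hω',
    Nat.mul_div_mul_left _ _ hω']

theorem card_primitive_circuits_fixed_origin_general
    (n a1 d : ℕ) (hd : 0 < d) (hn : a1 + d < n)
    (v : ZMod n) (l : ℕ) (hl : 0 < l) (m : ℕ) :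
    (Nat.card {c : Circuit n a1 (a1 + d) //
        c.start = v ∧ c.len = l ∧ c.walkSum = m * n ∧ c.IsPrimitive} : ℤ) =
      ∑ ω ∈ (Nat.gcd m l).divisors,
        (ArithmeticFunction.moebius ω : ℤ) *
          (if a1 * l ≤ m * n ∧ ω * d ∣ m * n - a1 * l then
            (((l / ω).choose ((m * n - a1 * l) / (ω * d))) : ℤ)
           else 0) := by
  change (Nat.card (primitiveCircuitsAt a1 (a1 + d) v l m) : ℤ) = _
  rw [card_primitiveCircuitsAt_eq_sum_moebius (show n ≠ 0 by omega) _ _ _ hl]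
  refine Finset.sum_congr rfl fun ω hω => ?_
  obtain ⟨hωm, hωl⟩ := Nat.dvd_gcd_iff.mp (Nat.dvd_of_mem_divisors hω)
  have hω0 : 0 < ω := Nat.pos_of_mem_divisors hω
  have hmn : ω * (m / ω * n) = m * n := by rw [← Nat.mul_assoc, Nat.mul_div_cancel' hωm]
  have hal : ω * (a1 * (l / ω)) = a1 * l := by rw [Nat.mul_left_comm, Nat.mul_div_cancel' hωl]
  rw [card_circuitsAt_eq_choose hd.ne' _ _ (Nat.div_pos (Nat.le_of_dvd hl hωl) hω0).ne',
    ite_choose_eq_ite_choose_mul hω0.ne', hmn, hal, Nat.cast_ite, Nat.cast_zero]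

/-- For the graph `C_n^+(a1, a1+d)` with `a1, d ≥ 1` and
`n > a1 + d`, for every vertex `v`, every length `l > 0` and every `m ≥ 1`, the
number of primitive circuits with origin vertex `v`, length `l` and walk sum
`m·n` is `Σ_{ω ∣ gcd(m,l)} μ(ω) · C(l/ω, (mn − a1·l)/(ω·d))`, where binomial
coefficients whose lower argument is not a nonnegative integer are interpreted
as `0`. -/
theorem card_primitive_circuits_fixed_origin
    (n a1 d : ℕ) (ha1 : 0 < a1) (hd : 0 < d) (hn : a1 + d < n)
    (v : ZMod n) (l : ℕ) (hl : 0 < l) (m : ℕ) (hm : 0 < m) :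
    (Nat.card {c : Circuit n a1 (a1 + d) //
        c.start = v ∧ c.len = l ∧ c.walkSum = m * n ∧ c.IsPrimitive} : ℤ) =
      ∑ ω ∈ (Nat.gcd m l).divisors,
        (ArithmeticFunction.moebius ω : ℤ) *
          (if a1 * l ≤ m * n ∧ ω * d ∣ m * n - a1 * l then
            (((l / ω).choose ((m * n - a1 * l) / (ω * d))) : ℤ)
           else 0) :=
  card_primitive_circuits_fixed_origin_general n a1 d hd hn v l hl m
end

section
/- Let n > 2 and let G = C_n^+(1,2) be the directed circulant graph on Z/nZ with outgoing arcs 1 and 2 at every vertex. Then every primitive pseudo orbit on G of length l with 0 < l < n consists of exactly one primitive periodic orbit, and that periodic orbit has length l and walk sum n. -/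
lemma sum_bounds_aux (L : List ℕ) (h : ∀ a ∈ L, a = 1 ∨ a = 2) :
    L.length ≤ L.sum ∧ L.sum ≤ 2 * L.length := by
  induction L with
  | nil => simp
  | cons a t ih =>
    have ha := h a (by simp)
    have := ih (fun b hb => h b (by simp [hb]))
    simp only [List.sum_cons, List.length_cons]
    omega

lemma orbit_facts (n : ℕ) (hn : 2 < n) (γ : PeriodicOrbit n 1 2) :
    n ∣ γ.walkSum ∧ 0 < γ.len ∧ γ.len ≤ γ.walkSum ∧ γ.walkSum ≤ 2 * γ.len := by
  haveI : NeZero n := ⟨by omega⟩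
  induction γ using Quot.ind with
  | _ c =>
    have hmem : ∀ a ∈ c.arcs, a = 1 ∨ a = 2 := c.arcs_mem
    have hb := sum_bounds_aux c.arcs hmem
    have hdvd : n ∣ c.arcs.sum := (ZMod.natCast_eq_zero_iff _ _).mp c.closed
    have hlen : 0 < c.arcs.length := List.length_pos_iff.mpr c.arcs_ne
    exact ⟨hdvd, hlen, hb.1, hb.2⟩

/-- On `C_n^+(1,2)` with `n > 2`, every primitive pseudo orbit
of length `l` with `0 < l < n` consists of exactly one primitive periodic orbit,
and that periodic orbit has length `l` and walk sum `n`. -/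
theorem primitive_pseudoOrbit_structure_one_two
    (n : ℕ) (hn : 2 < n) (l : ℕ) (hl : 0 < l) (hln : l < n)
    (ps : PseudoOrbit n 1 2) (hps : ps.IsPrimitive) (hlen : ps.len = l) :
    ∃ γ : PeriodicOrbit n 1 2,
      ps = {γ} ∧ γ.IsPrimitive ∧ γ.len = l ∧ γ.walkSum = n := by
  -- each member has walkSum a positive multiple of n, so len ≥ n/2
  have key : ∀ γ ∈ ps, n ≤ PeriodicOrbit.walkSum γ ∧
      PeriodicOrbit.walkSum γ ≤ 2 * PeriodicOrbit.len γ ∧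
      PeriodicOrbit.len γ ≤ PeriodicOrbit.walkSum γ := by
    intro γ _
    obtain ⟨hdvd, hpos, h1, h2⟩ := orbit_facts n hn γ
    have : 0 < γ.walkSum := lt_of_lt_of_le hpos h1
    exact ⟨Nat.le_of_dvd this hdvd, h2, h1⟩
  -- card bound: n * card ≤ 2 * l
  have hcard : n * Multiset.card ps ≤ 2 * l := by
    have h1 : (ps.map fun _ => n).sum ≤ (ps.map fun γ => 2 * PeriodicOrbit.len γ).sum := by
      apply Multiset.sum_map_le_sum_map
      intro γ hγ
      obtain ⟨a, b, c⟩ := key γ hγ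
      omega
    have h2 : (ps.map fun _ => n).sum = n * Multiset.card ps := by
      simp [Multiset.map_const', Multiset.sum_replicate, mul_comm]
    have h3 : (ps.map fun γ => 2 * PeriodicOrbit.len γ).sum = 2 * ps.len := by
      simp [PseudoOrbit.len, Multiset.sum_map_mul_left]
    rw [h2, h3, hlen] at h1
    exact h1
  have hne : ps ≠ 0 := by
    intro h
    rw [h] at hlen
    simp [PseudoOrbit.len] at hlen
    omega
  have hc1 : Multiset.card ps = 1 := by
    have : 0 < Multiset.card ps := Multiset.card_pos.mpr hne
    nlinarith [hcard, hln, this]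
  obtain ⟨γ, hγ⟩ := Multiset.card_eq_one.mp hc1
  refine ⟨γ, hγ, hps.1 γ (by simp [hγ]), ?_, ?_⟩
  · have : ps.len = γ.len := by simp [hγ, PseudoOrbit.len]
    omega
  · have hmem : γ ∈ ps := by simp [hγ]
    obtain ⟨a, b, c⟩ := key γ hmem
    have hlg : γ.len = l := by
      have : ps.len = γ.len := by simp [hγ, PseudoOrbit.len]
      omega
    obtain ⟨hdvd, _, _, _⟩ := orbit_facts n hn γ
    obtain ⟨k, hk⟩ := hdvd
    -- n ≤ walkSum = n*k ≤ 2*l < 2*n, so k = 1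
    have hle : γ.walkSum ≤ 2 * l := by omega
    have hk0 : k ≠ 0 := by rintro rfl; simp at hk; omega
    have hk2 : k < 2 := by
      by_contra h
      push_neg at h
      have : n * 2 ≤ n * k := Nat.mul_le_mul_left n h
      omega
    have : k = 1 := by omega
    subst this
    omega
end
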